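/- Let g ≥ 1, let w be a permutation of {1,…,2g} with w(2g+1−i) = 2g+1−w(i) for all i, and let λ ∈ ℤ^{2g} with λ(i) + λ(2g+1−i) = 1 for all i and Σ_j λ(j) = g. For 0 ≤ i ≤ 2g define ω_i ∈ ℤ^{2g} by ω_i(j) = −1 for j ≤ i and 0 otherwise, x_i := λ + w·ω_i (with (w·v)(j) = v(w⁻¹(j))), and assume x_i(j) − ω_i(j) ∈ {0,1} for all i, j. Define x̃_i(j) := min(x_i(j), 0) and ρ(i) := λ(w(i)). Then: (1) for each 0 ≤ i ≤ g there is a unique vector x'_i occurring among x̃_0, …, x̃_{2g} with Σ_j x'_i(j) = −i; (2) there is a unique element v ∈ W (permutations of {1,…,2g} with v(2g+1−i) = 2g+1−v(i)) such that v·ω_i = x'_i for all 0 ≤ i ≤ g; (3) letting μ = (1,…,1,0,…,0) ∈ ℤ^{2g} (g ones followed by g zeros), w₀ the permutation i ↦ 2g+1−i, and w_ρ the unique element of W with w_ρ(1) < w_ρ(2) < ⋯ < w_ρ(g) and w_ρ·μ = w₀·ρ, one has v = w∘w_ρ. -/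

import Mathlib

open Finset

/-- The vector `ω_i ∈ ℤ^{2g}` (0-indexed model of positions `{1,…,2g}`): its
first `i` entries are `−1` and the remaining entries are `0`. -/
def omegaVec (g : ℕ) (i : ℕ) : Fin (2 * g) → ℤ :=
  fun j => if j.val < i then -1 else 0

/-- The extended alcove `x_i := λ + w·ω_i`, where `(w·v)(j) = v(w⁻¹(j))`. -/
def alcoveX (g : ℕ) (w : Equiv.Perm (Fin (2 * g))) (lam : Fin (2 * g) → ℤ)
    (i : ℕ) : Fin (2 * g) → ℤ :=
  fun j => lam j + omegaVec g i (w⁻¹ j)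

/-- `x̃_i(j) := min(x_i(j), 0)`. -/
def alcoveXt (g : ℕ) (w : Equiv.Perm (Fin (2 * g))) (lam : Fin (2 * g) → ℤ)
    (i : ℕ) : Fin (2 * g) → ℤ :=
  fun j => min (alcoveX g w lam i j) 0

/-- The cocharacter `μ = (1^{(g)}, 0^{(g)}) ∈ ℤ^{2g}`. -/
def muVec (g : ℕ) : Fin (2 * g) → ℤ := fun j => if j.val < g then 1 else 0

/-- The symmetry condition defining the Weyl group `W` of `GSp_{2g}` inside
`S_{2g}`: `w(2g+1−i) = 2g+1−w(i)` for all `i` (0-indexed via `Fin.rev`). -/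
def InW (g : ℕ) (w : Equiv.Perm (Fin (2 * g))) : Prop :=
  ∀ k : Fin (2 * g), w k.rev = (w k).rev

/-- `w` is final: `w(1) < w(2) < ⋯ < w(g)`. -/
def IsFinal (g : ℕ) (w : Equiv.Perm (Fin (2 * g))) : Prop :=
  ∀ a b : Fin (2 * g), a < b → b.val < g → w a < w b

theorem Equiv.Perm.apply_inv_self {α : Type*} (f : Equiv.Perm α) (x : α) : f (f⁻¹ x) = x :=
  Equiv.apply_symm_apply f x

theorem Equiv.Perm.inv_apply_self {α : Type*} (f : Equiv.Perm α) (x : α) : f⁻¹ (f x) = x :=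
  Equiv.symm_apply_apply f x

private lemma nat_ivt (f : ℕ → ℕ) (hstep : ∀ m, f (m+1) ≤ f m + 1) :
    ∀ n i, f 0 ≤ i → i ≤ f n → ∃ m ≤ n, f m = i := by
  intro n
  induction n with
  | zero => intro i h0 hi; exact ⟨0, le_rfl, by omega⟩
  | succ n ih =>
    intro i h0 hi
    by_cases h : i ≤ f n
    · obtain ⟨m, hm, hfm⟩ := ih i h0 h
      exact ⟨m, by omega, hfm⟩
    · exact ⟨n+1, le_rfl, by have := hstep n; omega⟩

private lemma downClosed_iff {n : ℕ} (S : Finset (Fin n))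
    (h : ∀ a b : Fin n, a ≤ b → b ∈ S → a ∈ S) (k : Fin n) :
    k ∈ S ↔ k.val < S.card := by
  constructor
  · intro hk
    have hsub : Finset.Iic k ⊆ S := fun a ha => h a k (Finset.mem_Iic.mp ha) hk
    have := Finset.card_le_card hsub
    rw [Fin.card_Iic] at this
    omega
  · intro hk
    by_contra hks
    have hsub : S ⊆ Finset.Iio k := by
      intro s hs
      rw [Finset.mem_Iio]
      rcases lt_or_ge s k with h' | h'
      · exact h'
      · exact absurd (h k s h' hs) hks
    have := Finset.card_le_card hsub
    rw [Fin.card_Iio] at this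
    omega

/-- positions `k` with `λ(w k) = 0`. -/
def Zset (g : ℕ) (w : Equiv.Perm (Fin (2 * g))) (lam : Fin (2 * g) → ℤ) :
    Finset (Fin (2 * g)) := Finset.univ.filter fun k => lam (w k) = 0

def Fm (g : ℕ) (w : Equiv.Perm (Fin (2 * g))) (lam : Fin (2 * g) → ℤ) (m : ℕ) :
    Finset (Fin (2 * g)) := (Zset g w lam).filter fun k => k.val < m

section
variable {g : ℕ} {w : Equiv.Perm (Fin (2 * g))} {lam : Fin (2 * g) → ℤ}

lemma mem_Fm {m : ℕ} {k : Fin (2*g)} :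
    k ∈ Fm g w lam m ↔ lam (w k) = 0 ∧ k.val < m := by
  simp [Fm, Zset]

lemma xt_apply (h01 : ∀ j, lam j = 0 ∨ lam j = 1) (m : ℕ) (j : Fin (2*g)) :
    alcoveXt g w lam m j = if w⁻¹ j ∈ Fm g w lam m then -1 else 0 := by
  unfold alcoveXt alcoveX omegaVec
  simp only [mem_Fm, Equiv.Perm.apply_inv_self]
  rcases h01 j with h | h <;> rw [h] <;> split_ifs <;> omega

lemma sum_xt (h01 : ∀ j, lam j = 0 ∨ lam j = 1) (m : ℕ) :
    ∑ j, alcoveXt g w lam m j = -((Fm g w lam m).card : ℤ) := by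
  have h1 : ∑ j, alcoveXt g w lam m j = ∑ k, (if k ∈ Fm g w lam m then (-1:ℤ) else 0) :=
    Fintype.sum_equiv (w⁻¹ : Equiv.Perm (Fin (2*g))) _ _ (fun j => xt_apply h01 m j)
  rw [h1, Finset.sum_ite_mem, Finset.univ_inter, Finset.sum_const]
  simp

lemma card_Z (h01 : ∀ j, lam j = 0 ∨ lam j = 1) (hsum : ∑ j, lam j = g) :
    (Zset g w lam).card = g := by
  have h2 : ∑ k, lam (w k) = (g:ℤ) := by
    rw [Fintype.sum_equiv w (fun k => lam (w k)) lam (fun k => rfl)]; exact hsum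
  have h3 : ∑ k : Fin (2*g), lam (w k)
      = ∑ k : Fin (2*g), (if lam (w k) = 0 then (0:ℤ) else 1) := by
    refine Finset.sum_congr rfl fun k _ => ?_
    rcases h01 (w k) with h | h <;> simp [h]
  rw [h3, Finset.sum_ite] at h2
  simp only [Finset.sum_const_zero, Finset.sum_const, nsmul_eq_mul, mul_one, zero_add] at h2
  have h4 := Finset.card_filter_add_card_filter_not
    (s := (Finset.univ : Finset (Fin (2*g)))) (p := fun k => lam (w k) = 0)
  rw [Finset.card_univ, Fintype.card_fin] at h4
  have h5 : (Finset.univ.filter fun k : Fin (2*g) => ¬ lam (w k) = 0).card = g := by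
    exact_mod_cast h2
  unfold Zset
  omega

lemma Fm_step (m : ℕ) : (Fm g w lam (m+1)).card ≤ (Fm g w lam m).card + 1 := by
  by_cases h : m < 2*g
  · have hsub : Fm g w lam (m+1) ⊆ insert ⟨m, h⟩ (Fm g w lam m) := by
      intro k hk
      rw [mem_Fm] at hk
      rcases Nat.lt_succ_iff_lt_or_eq.mp hk.2 with h' | h'
      · exact Finset.mem_insert_of_mem (mem_Fm.mpr ⟨hk.1, h'⟩)
      · have : k = ⟨m, h⟩ := Fin.ext h'
        rw [this]; exact Finset.mem_insert_self _ _
    calc (Fm g w lam (m+1)).card ≤ (insert (⟨m, h⟩ : Fin (2*g)) (Fm g w lam m)).card :=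
          Finset.card_le_card hsub
      _ ≤ (Fm g w lam m).card + 1 := Finset.card_insert_le _ _
  · have heq : Fm g w lam (m+1) = Fm g w lam m := by
      ext k; rw [mem_Fm, mem_Fm]; have := k.isLt; omega
    rw [heq]; omega

lemma Fm_mono {m m' : ℕ} (h : m ≤ m') : Fm g w lam m ⊆ Fm g w lam m' := by
  intro k hk; rw [mem_Fm] at hk ⊢; exact ⟨hk.1, by omega⟩

lemma Fm_exists (hZ : (Zset g w lam).card = g) :
    ∀ i ≤ g, ∃ m ≤ 2*g, (Fm g w lam m).card = i := by
  intro i hi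
  have h0 : (Fm g w lam 0).card = 0 := by simp [Fm]
  have h2g : (Fm g w lam (2*g)).card = g := by
    have heq : Fm g w lam (2*g) = Zset g w lam := by
      ext k; rw [mem_Fm]; simp [Zset, k.isLt]
    rw [heq, hZ]
  exact nat_ivt (fun m => (Fm g w lam m).card) Fm_step (2*g) i
    (by show (Fm g w lam 0).card ≤ i; omega) (by show i ≤ (Fm g w lam (2*g)).card; omega)

lemma xt_eq_of_card_eq (h01 : ∀ j, lam j = 0 ∨ lam j = 1) {m m' : ℕ}
    (hc : (Fm g w lam m).card = (Fm g w lam m').card) :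
    alcoveXt g w lam m = alcoveXt g w lam m' := by
  have hFeq : Fm g w lam m = Fm g w lam m' := by
    rcases le_total m m' with h | h
    · exact Finset.eq_of_subset_of_card_le (Fm_mono h) (le_of_eq hc.symm)
    · exact (Finset.eq_of_subset_of_card_le (Fm_mono h) (le_of_eq hc)).symm
  funext j; rw [xt_apply h01, xt_apply h01, hFeq]

lemma omega_eq_xt (h01 : ∀ j, lam j = 0 ∨ lam j = 1)
    (hZ : (Zset g w lam).card = g)
    (u : Equiv.Perm (Fin (2*g)))
    (hu : ∀ k : Fin (2*g), ∀ h : k.val < g,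
      u k = (Zset g w lam).orderEmbOfFin hZ ⟨k.val, h⟩)
    {i m : ℕ} (hi : i ≤ g) (hm : (Fm g w lam m).card = i) :
    (fun j => omegaVec g i ((w * u)⁻¹ j)) = alcoveXt g w lam m := by
  set e := (Zset g w lam).orderEmbOfFin hZ with he
  have hrange : ∀ x : Fin (2*g), x ∈ Zset g w lam ↔ ∃ a, e a = x := by
    intro x
    constructor
    · intro hx
      have h1 := Finset.range_orderEmbOfFin (Zset g w lam) hZ
      have h2 : x ∈ Set.range e := by rw [he, h1]; exact hx
      exact h2
    · rintro ⟨a, rfl⟩; exact Finset.orderEmbOfFin_mem _ hZ a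
  set S : Finset (Fin g) := Finset.univ.filter (fun a : Fin g => e a ∈ Fm g w lam m) with hS
  have hmemS : ∀ a : Fin g, a ∈ S ↔ e a ∈ Fm g w lam m := by
    intro a; rw [hS]; simp
  have hSdown : ∀ a b : Fin g, a ≤ b → b ∈ S → a ∈ S := by
    intro a b hab hb
    rw [hmemS] at hb ⊢
    rw [mem_Fm] at hb ⊢
    constructor
    · have h1 : e a ∈ Finset.univ.filter (fun k => lam (w k) = 0) :=
        Finset.orderEmbOfFin_mem (Zset g w lam) hZ a
      exact (Finset.mem_filter.mp h1).2
    · have h2 : (e a).val ≤ (e b).val := e.monotone hab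
      omega
  have hScard : S.card = i := by
    rw [← hm]
    apply Finset.card_bij (fun a _ => e a)
    · intro a ha; exact (hmemS a).mp ha
    · intro a _ b _ hab; exact e.injective hab
    · intro x hx
      have hxZ : x ∈ Zset g w lam := (Finset.mem_filter.mp hx).1
      obtain ⟨a, rfl⟩ := (hrange x).mp hxZ
      exact ⟨a, (hmemS a).mpr hx, rfl⟩
  have hkey : ∀ k : Fin (2*g), (k.val < i ↔ u k ∈ Fm g w lam m) := by
    intro k
    by_cases h : k.val < g
    · rw [hu k h]
      have hdc := downClosed_iff S hSdown ⟨k.val, h⟩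
      rw [hScard, hmemS] at hdc
      exact hdc.symm
    · constructor
      · intro hk; omega
      · intro hk
        exfalso
        have hxZ : u k ∈ Zset g w lam := (Finset.mem_filter.mp hk).1
        obtain ⟨a, ha⟩ := (hrange _).mp hxZ
        have hval : a.val < 2*g := by omega
        have h2 : u ⟨a.val, hval⟩ = u k := by rw [hu ⟨a.val, hval⟩ a.isLt]; exact ha
        have h3 := u.injective h2
        have : a.val = k.val := congrArg Fin.val h3
        omega
  funext j
  rw [xt_apply h01 m j]
  have hinv : (w * u)⁻¹ j = u⁻¹ (w⁻¹ j) := rfl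
  rw [hinv]
  have hk := hkey (u⁻¹ (w⁻¹ j))
  rw [Equiv.Perm.apply_inv_self] at hk
  unfold omegaVec
  split_ifs with h1 h2 h2
  · rfl
  · exact absurd (hk.mp h1) h2
  · exact absurd (hk.mpr h2) h1
  · rfl

end

/-- Let `w ∈ W` and let `λ ∈ ℤ^{2g}` with `λ(i) + λ(2g+1−i) = 1` and
`Σ_j λ(j) = g`, satisfying the permissibility condition for the extended
alcove `x_i = λ + w·ω_i`.  Then:
(1) for each `0 ≤ i ≤ g` there is a unique vector `x'_i` occurring among
    `x̃_0, …, x̃_{2g}` whose entries sum to `−i`;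
(2) there is a unique `v ∈ W` with `v·ω_i = x'_i` for all `0 ≤ i ≤ g`;
(3) for `μ = (1^{(g)}, 0^{(g)})`, `w₀ : i ↦ 2g+1−i`, `ρ(i) = λ(w(i))` and
    `w_ρ` the unique final element of `W` with `w_ρ·μ = w₀·ρ`, this unique `v`
    equals `w ∘ w_ρ`. -/
theorem alcove_flag_relative_position (g : ℕ) (hg : 0 < g)
    (w : Equiv.Perm (Fin (2 * g))) (hw : InW g w)
    (lam : Fin (2 * g) → ℤ)
    (hlam : ∀ i : Fin (2 * g), lam i + lam i.rev = 1)
    (hsum : ∑ j, lam j = g)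
    (hperm : ∀ i ≤ 2 * g, ∀ j,
      alcoveX g w lam i j - omegaVec g i j = 0 ∨
      alcoveX g w lam i j - omegaVec g i j = 1) :
    (∀ i : ℕ, i ≤ g →
      ∃! v : Fin (2 * g) → ℤ,
        (∃ m ≤ 2 * g, v = alcoveXt g w lam m) ∧ ∑ j, v j = -(i : ℤ)) ∧
    (∀ x' : ℕ → Fin (2 * g) → ℤ,
      (∀ i ≤ g, (∃ m ≤ 2 * g, x' i = alcoveXt g w lam m) ∧
        ∑ j, x' i j = -(i : ℤ)) →
      (∃! v : Equiv.Perm (Fin (2 * g)), InW g v ∧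
        ∀ i ≤ g, (fun j => omegaVec g i (v⁻¹ j)) = x' i) ∧
      (∀ v : Equiv.Perm (Fin (2 * g)), InW g v →
        (∀ i ≤ g, (fun j => omegaVec g i (v⁻¹ j)) = x' i) →
        ∀ wρ : Equiv.Perm (Fin (2 * g)), InW g wρ → IsFinal g wρ →
          (∀ j : Fin (2 * g), muVec g (wρ⁻¹ j) = lam (w j.rev)) →
          v = w * wρ)) := by
  -- λ takes values in {0,1}
  have h01 : ∀ j, lam j = 0 ∨ lam j = 1 := by
    intro j
    have h := hperm 0 (by omega) j
    unfold alcoveX omegaVec at h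
    simpa using h
  have hZ : (Zset g w lam).card = g := card_Z h01 hsum
  set e := (Zset g w lam).orderEmbOfFin hZ with he_def
  have hlamrev : ∀ i : Fin (2*g), lam i.rev = 1 - lam i := by
    intro i; have := hlam i; omega
  have hrevZ : ∀ z : Fin (2*g), lam (w z) = 0 → lam (w z.rev) = 1 := by
    intro z hz
    rw [hw z, hlamrev (w z), hz]
    norm_num
  have rev_lt : ∀ k : Fin (2*g), ¬ k.val < g → k.rev.val < g := by
    intro k h; rw [Fin.val_rev]; have := k.isLt; omega
  have rev_ge : ∀ k : Fin (2*g), k.val < g → ¬ k.rev.val < g := by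
    intro k h; rw [Fin.val_rev]; omega
  have hinvW : ∀ v : Equiv.Perm (Fin (2*g)), InW g v →
      ∀ j : Fin (2*g), v⁻¹ j.rev = (v⁻¹ j).rev := by
    intro v hv j
    apply v.injective
    rw [Equiv.Perm.apply_inv_self, hv (v⁻¹ j), Equiv.Perm.apply_inv_self]
  have hWmul : ∀ u u' : Equiv.Perm (Fin (2*g)), InW g u → InW g u' → InW g (u * u') := by
    intro u u' h1 h2 k
    simp only [Equiv.Perm.mul_apply, h2 k, h1 (u' k)]
  -- uniqueness of the permutation matching a flag
  have uniq : ∀ (x' : ℕ → Fin (2*g) → ℤ) (v v' : Equiv.Perm (Fin (2*g))),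
      InW g v → InW g v' →
      (∀ i ≤ g, (fun j => omegaVec g i (v⁻¹ j)) = x' i) →
      (∀ i ≤ g, (fun j => omegaVec g i (v'⁻¹ j)) = x' i) → v = v' := by
    intro x' v v' hv hv' h1 h2
    have hiff : ∀ i ≤ g, ∀ j : Fin (2*g), ((v⁻¹ j).val < i ↔ (v'⁻¹ j).val < i) := by
      intro i hi j
      have heq : omegaVec g i (v⁻¹ j) = omegaVec g i (v'⁻¹ j) := by
        rw [show omegaVec g i (v⁻¹ j) = (fun j => omegaVec g i (v⁻¹ j)) j from rfl,
          h1 i hi, ← h2 i hi]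
      unfold omegaVec at heq
      split_ifs at heq <;> omega
    have hlow : ∀ j : Fin (2*g), (v⁻¹ j).val < g → v⁻¹ j = v'⁻¹ j := by
      intro j hj
      have ha := (hiff ((v⁻¹ j).val + 1) (by omega) j).mp (by omega)
      have hc : ¬ (v'⁻¹ j).val < (v⁻¹ j).val :=
        fun h => absurd ((hiff _ (by omega) j).mpr h) (by omega)
      apply Fin.ext; omega
    have hall : ∀ j, v⁻¹ j = v'⁻¹ j := by
      intro j
      by_cases hj : (v⁻¹ j).val < g
      · exact hlow j hj
      · have h1' := hlow j.rev (by rw [hinvW v hv j]; exact rev_lt _ hj)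
        rw [hinvW v hv j, hinvW v' hv' j] at h1'
        exact Fin.rev_injective h1'
    have hinv : v⁻¹ = v'⁻¹ := Equiv.ext hall
    rw [← inv_inv v, hinv, inv_inv]
  constructor
  · -- part (1)
    intro i hi
    obtain ⟨m, hm, hcm⟩ := Fm_exists (w := w) (lam := lam) hZ i hi
    refine ⟨alcoveXt g w lam m, ⟨⟨m, hm, rfl⟩, by rw [sum_xt h01, hcm]⟩, ?_⟩
    rintro v ⟨⟨m', hm', rfl⟩, hsum'⟩
    have hcm' : (Fm g w lam m').card = i := by
      rw [sum_xt h01] at hsum'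
      exact_mod_cast neg_injective hsum'
    exact xt_eq_of_card_eq h01 (hcm'.trans hcm.symm)
  · -- parts (2) and (3)
    intro x' hx'
    have hxm : ∀ i ≤ g, ∃ m, (Fm g w lam m).card = i ∧ x' i = alcoveXt g w lam m := by
      intro i hi
      obtain ⟨⟨m, hm, hxe⟩, hs⟩ := hx' i hi
      refine ⟨m, ?_, hxe⟩
      rw [hxe, sum_xt h01] at hs
      exact_mod_cast neg_injective hs
    have happly : ∀ u : Equiv.Perm (Fin (2*g)),
        (∀ k : Fin (2*g), ∀ h : k.val < g, u k = e ⟨k.val, h⟩) →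
        ∀ i ≤ g, (fun j => omegaVec g i ((w * u)⁻¹ j)) = x' i := by
      intro u hu i hi
      obtain ⟨m, hcm, hxe⟩ := hxm i hi
      rw [hxe]
      exact omega_eq_xt h01 hZ u hu hi hcm
    -- construct the distinguished permutation u0
    have heZ : ∀ a : Fin g, lam (w (e a)) = 0 := by
      intro a
      have h1 : e a ∈ Finset.univ.filter (fun k => lam (w k) = 0) :=
        Finset.orderEmbOfFin_mem (Zset g w lam) hZ a
      exact (Finset.mem_filter.mp h1).2
    have hrevnotZ : ∀ a : Fin g, lam (w ((e a).rev)) = 1 := fun a => hrevZ _ (heZ a)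
    set u0f : Fin (2*g) → Fin (2*g) := fun k =>
      if h : k.val < g then e ⟨k.val, h⟩ else (e ⟨k.rev.val, rev_lt k h⟩).rev with hu0f
    have hu0fexp : ∀ k : Fin (2*g), u0f k =
        if h : k.val < g then e ⟨k.val, h⟩ else (e ⟨k.rev.val, rev_lt k h⟩).rev :=
      fun k => rfl
    have hinj : Function.Injective u0f := by
      intro a b hab
      rw [hu0fexp a, hu0fexp b] at hab
      by_cases ha : a.val < g <;> by_cases hb : b.val < g
      · rw [dif_pos ha, dif_pos hb] at hab
        have h3 := e.injective hab
        have h4 : a.val = b.val := by simpa [Fin.ext_iff] using h3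
        exact Fin.ext h4
      · rw [dif_pos ha, dif_neg hb] at hab
        have h1 := heZ ⟨a.val, ha⟩
        rw [hab, hrevnotZ _] at h1
        omega
      · rw [dif_neg ha, dif_pos hb] at hab
        have h1 := heZ ⟨b.val, hb⟩
        rw [← hab, hrevnotZ _] at h1
        omega
      · rw [dif_neg ha, dif_neg hb] at hab
        have h3 := e.injective (Fin.rev_injective hab)
        have h4 : a.rev.val = b.rev.val := by simpa [Fin.ext_iff] using h3
        exact Fin.rev_injective (Fin.ext h4)
    set u0 : Equiv.Perm (Fin (2*g)) :=
      Equiv.ofBijective u0f (Finite.injective_iff_bijective.mp hinj) with hu0def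
    have hu0app : ∀ k : Fin (2*g), u0 k = u0f k := fun k => rfl
    have hu0 : ∀ k : Fin (2*g), ∀ h : k.val < g, u0 k = e ⟨k.val, h⟩ := by
      intro k h; rw [hu0app, hu0f]; exact dif_pos h
    have hu0' : ∀ k : Fin (2*g), ∀ h : ¬ k.val < g,
        u0 k = (e ⟨k.rev.val, rev_lt k h⟩).rev := by
      intro k h; rw [hu0app, hu0f]; exact dif_neg h
    have hWu0 : InW g u0 := by
      intro k
      by_cases h : k.val < g
      · rw [hu0' k.rev (rev_ge k h), hu0 k h]
        have hval : (⟨k.rev.rev.val, rev_lt k.rev (rev_ge k h)⟩ : Fin g) = ⟨k.val, h⟩ := by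
          apply Fin.ext
          simp [Fin.rev_rev]
        rw [hval]
      · rw [hu0 k.rev (rev_lt k h), hu0' k h, Fin.rev_rev]
    refine ⟨⟨w * u0, ⟨hWmul w u0 hw hWu0, happly u0 hu0⟩, ?_⟩, ?_⟩
    · rintro v ⟨hvW, hvx⟩
      exact uniq x' v (w * u0) hvW (hWmul w u0 hw hWu0) hvx (happly u0 hu0)
    · -- part (3)
      intro v hvW hvx wρ hWρ hfin hμ
      have hgle : g ≤ 2*g := by omega
      have hρZ : ∀ a : Fin g, lam (w (wρ (Fin.castLE hgle a))) = 0 := by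
        intro a
        have h1 := hμ (wρ (Fin.castLE hgle a))
        rw [Equiv.Perm.inv_apply_self] at h1
        unfold muVec at h1
        rw [if_pos (show (Fin.castLE hgle a).val < g from a.isLt)] at h1
        rw [hw, hlamrev] at h1
        omega
      have hmono : StrictMono (fun a : Fin g => wρ (Fin.castLE hgle a)) := by
        intro a b hab
        exact hfin _ _ (by exact hab) b.isLt
      have hwρe := Finset.orderEmbOfFin_unique hZ
        (f := fun a : Fin g => wρ (Fin.castLE hgle a))
        (fun a => by
          have : wρ (Fin.castLE hgle a) ∈ Finset.univ.filter (fun k => lam (w k) = 0) := by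
            simp [hρZ a]
          exact this) hmono
      have hwρ : ∀ k : Fin (2*g), ∀ h : k.val < g, wρ k = e ⟨k.val, h⟩ := by
        intro k h
        have h2 := congrFun hwρe ⟨k.val, h⟩
        rwa [show Fin.castLE hgle (⟨k.val, h⟩ : Fin g) = k from Fin.ext rfl] at h2
      exact uniq x' v (w * wρ) hvW (hWmul w wρ hw hWρ) hvx (happly wρ hwρ)
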